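/- Let (X,d,μ) be a complete metric measure space with μ Borel regular and doubling with constant C_μ, admitting a p-Poincaré inequality with constant L ≥ 1 for some p ≥ 1. Then X is λ-quasiconvex, where λ depends only on C_μ, L and p: every pair of points x, x' ∈ X can be joined by a rectifiable curve in X of length at most λ·d(x,x'). -/

import Mathlib

open Metric MeasureTheory Filter Set
open scoped NNReal ENNReal

/-- The variation of `f` on the ball `B(x,r)`: `sup { |f y - f x| / r : y ∈ B(x,r) }`. -/
noncomputable def varBall {X : Type*} [MetricSpace X] (f : X → ℝ) (x : X) (r : ℝ) : ℝ :=
  sSup ((fun y => |f y - f x| / r) '' Metric.ball x r)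

/-- Lower pointwise Lipschitz constant `lip_x f`. -/
noncomputable def lipLow {X : Type*} [MetricSpace X] (f : X → ℝ) (x : X) : ℝ :=
  Filter.liminf (fun r => varBall f x r) (nhdsWithin 0 (Set.Ioi (0:ℝ)))

/-- Upper pointwise Lipschitz constant `Lip_x f`. -/
noncomputable def lipUp {X : Type*} [MetricSpace X] (f : X → ℝ) (x : X) : ℝ :=
  Filter.limsup (fun r => varBall f x r) (nhdsWithin 0 (Set.Ioi (0:ℝ)))

/-- `f` is a real-valued Lipschitz function. -/
def IsLip {X : Type*} [MetricSpace X] (f : X → ℝ) : Prop := ∃ K : ℝ≥0, LipschitzWith K f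

/-- `μ` is doubling with constant `C`. -/
def DoublingWith {X : Type*} [MetricSpace X] [MeasurableSpace X] (μ : Measure X) (C : ℝ≥0) :
    Prop :=
  ∀ (x : X) (r : ℝ), 0 < r → μ (Metric.ball x (2 * r)) ≤ (C : ℝ≥0∞) * μ (Metric.ball x r)

/-- `(X, μ)` admits a `p`-Poincaré inequality with constant `L`. -/
def PoincareIneq {X : Type*} [MetricSpace X] [MeasurableSpace X] (μ : Measure X) (p L : ℝ) :
    Prop :=
  (∀ (x : X) (r : ℝ), 0 < r → 0 < μ (Metric.ball x r) ∧ μ (Metric.ball x r) < ⊤) ∧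
  ∀ f : X → ℝ, IsLip f → ∀ (x : X) (r : ℝ), 0 < r →
    ⨍ y in Metric.ball x r, |f y - ⨍ z in Metric.ball x r, f z ∂μ| ∂μ ≤
      L * r * (⨍ z in Metric.ball x (L * r), (lipLow f z) ^ p ∂μ) ^ (1 / p)

/-- An `N`-tuple of functions is dependent to first order at `x`. -/
def DependentAt {X : Type*} [MetricSpace X] {N : ℕ} (f : Fin N → X → ℝ) (x : X) : Prop :=
  ∃ l : Fin N → ℝ, l ≠ 0 ∧ lipUp (fun y => ∑ i, l i * f i y) x = 0

/-- A measurable differentiable structure of dimension at most `N₀`. -/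
def HasMDS {X : Type*} [MetricSpace X] [MeasurableSpace X] (μ : Measure X) (N₀ : ℕ) : Prop :=
  ∃ (ι : Type) (_ : Countable ι) (U : ι → Set X) (N : ι → ℕ)
      (φ : (i : ι) → Fin (N i) → X → ℝ),
    (∀ i, MeasurableSet (U i) ∧ 0 < μ (U i)) ∧
    μ (Set.univ \ ⋃ i, U i) = 0 ∧
    (∀ i, N i ≤ N₀) ∧
    (∀ i k, IsLip (φ i k)) ∧
    (∀ f : X → ℝ, IsLip f → ∀ i, ∃ df : X → (Fin (N i) → ℝ),
      Measurable df ∧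
      (∀ᵐ x ∂(μ.restrict (U i)),
        lipUp (fun y => f y - ∑ k, df x k * φ i k y) x = 0) ∧
      ∀ dg : X → (Fin (N i) → ℝ), Measurable dg →
        (∀ᵐ x ∂(μ.restrict (U i)),
          lipUp (fun y => f y - ∑ k, dg x k * φ i k y) x = 0) →
        (∀ᵐ x ∂(μ.restrict (U i)), df x = dg x))


/-!
Semmes' argument. Fix `ε > 0` and let `f y` be the least length of an `ε`-chain from `x` to `y`,
truncated at a height `M`. At scales below `ε` the function `f` is `1`-Lipschitz, so `lip f ≤ 1`,
and the Poincaré inequality bounds the mean oscillation of `f` on every ball of radius `r` by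
`L r`. Telescoping over dyadic balls with the doubling property turns this into
`|f x' - f x| ≤ (6 C_μ + 2 C_μ²) L d(x, x')`; choosing `M` just above this bound, `x` and `x'` are
joined by `ε`-chains of length at most `λ d(x, x')` for every `ε`. Doubling and completeness make
closed balls compact, and pointwise limits along an ultrafilter of the arclength parametrisations
of these chains form a `λ d(x, x')`-Lipschitz path on `[0, 1]`.
-/

open Topology

section

variable {X : Type*} [MetricSpace X]

section PointwiseLip

variable {f : X → ℝ} {x : X} {r ε K M : ℝ}

lemma varBall_nonneg (hr : 0 < r) : 0 ≤ varBall f x r :=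
  Real.sSup_nonneg <| by rintro _ ⟨y, -, rfl⟩; positivity

lemma varBall_le (hK : 0 ≤ K) (hr : 0 < r) (h : ∀ y ∈ ball x r, |f y - f x| ≤ K * r) :
    varBall f x r ≤ K :=
  Real.sSup_le (by rintro _ ⟨y, hy, rfl⟩; exact (div_le_iff₀ hr).2 (h y hy)) hK

lemma lipLow_mem_Icc (hε : 0 < ε) (hK : 0 ≤ K)
    (h : ∀ y, dist y x < ε → |f y - f x| ≤ K * dist y x) : lipLow f x ∈ Icc 0 K := by
  have hev : ∀ᶠ r in 𝓝[>] (0 : ℝ), varBall f x r ∈ Icc 0 K := by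
    filter_upwards [Ioo_mem_nhdsGT hε] with r hr
    refine ⟨varBall_nonneg hr.1, varBall_le hK hr.1 fun y hy => ?_⟩
    have hy : dist y x < r := hy
    exact (h y (hy.trans hr.2)).trans (by gcongr)
  exact ⟨le_liminf_of_le (isCoboundedUnder_ge_of_eventually_le _ (hev.mono fun _ h => h.2))
      (hev.mono fun _ h => h.1),
    liminf_le_of_frequently_le (hev.mono fun _ h => h.2).frequently
      (isBoundedUnder_of_eventually_ge (hev.mono fun _ h => h.1))⟩

lemma lipschitzWith_of_le_add_of_mem_Icc (hε : 0 < ε) (hM : ∀ y, f y ∈ Icc 0 M)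
    (hloc : ∀ y z, dist y z < ε → f z ≤ f y + dist y z) :
    LipschitzWith (max 1 (M / ε)).toNNReal f := by
  refine LipschitzWith.of_le_add_mul' _ fun z y => ?_
  rcases lt_or_ge (dist y z) ε with h | h
  · nlinarith [hloc y z h, le_max_left 1 (M / ε), dist_nonneg (x := z) (y := y), dist_comm y z]
  · have hMε : M ≤ M / ε * dist z y := by
      rw [div_mul_eq_mul_div, le_div_iff₀ hε, dist_comm]
      exact mul_le_mul_of_nonneg_left h ((hM y).1.trans (hM y).2)
    nlinarith [(hM z).2, (hM y).1, le_max_right 1 (M / ε), dist_nonneg (x := z) (y := y)]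

end PointwiseLip

structure EpsChain (ε : ℝ) (x y : X) where
  len : ℕ
  pt : ℕ → X
  pt_zero : pt 0 = x
  pt_len : pt len = y
  dist_lt : ∀ i < len, dist (pt i) (pt (i + 1)) < ε

namespace EpsChain

variable {ε : ℝ} {x y z : X}

def arcLength (c : EpsChain ε x y) (i : ℕ) : ℝ :=
  ∑ j ∈ Finset.range i, dist (c.pt j) (c.pt (j + 1))

def length (c : EpsChain ε x y) : ℝ := c.arcLength c.len

def refl (ε : ℝ) (x : X) : EpsChain ε x x where
  len := 0
  pt _ := x
  pt_zero := rfl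
  pt_len := rfl
  dist_lt _ h := absurd h (Nat.not_lt_zero _)

@[simp] lemma length_refl : (refl ε x).length = 0 := by simp [refl, length, arcLength]

def snoc (c : EpsChain ε x y) (h : dist y z < ε) : EpsChain ε x z where
  len := c.len + 1
  pt i := if i ≤ c.len then c.pt i else z
  pt_zero := by simp [c.pt_zero]
  pt_len := by simp
  dist_lt i hi := by
    rcases Nat.lt_succ_iff_lt_or_eq.1 hi with hi | rfl
    · simpa [hi.le, Nat.succ_le_of_lt hi] using c.dist_lt i hi
    · simpa [c.pt_len] using h

lemma length_snoc (c : EpsChain ε x y) (h : dist y z < ε) :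
    (c.snoc h).length = c.length + dist y z := by
  simp only [length, arcLength, snoc, Finset.sum_range_succ, le_refl, if_true,
    Nat.not_succ_le_self, if_false, c.pt_len]
  congr 1
  refine Finset.sum_congr rfl fun j hj => ?_
  have hj := Finset.mem_range.1 hj
  simp [hj.le, Nat.succ_le_of_lt hj]

lemma arcLength_succ (c : EpsChain ε x y) (i : ℕ) :
    c.arcLength (i + 1) = c.arcLength i + dist (c.pt i) (c.pt (i + 1)) :=
  Finset.sum_range_succ _ _

lemma arcLength_zero (c : EpsChain ε x y) : c.arcLength 0 = 0 := rfl

lemma arcLength_mono (c : EpsChain ε x y) : Monotone c.arcLength := fun _ _ h =>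
  Finset.sum_le_sum_of_subset_of_nonneg (Finset.range_subset_range.2 h) fun _ _ _ => dist_nonneg

lemma dist_pt_le (c : EpsChain ε x y) {i j : ℕ} (hij : i ≤ j) :
    dist (c.pt i) (c.pt j) ≤ c.arcLength j - c.arcLength i := by
  induction j, hij using Nat.le_induction with
  | base => simp
  | succ j _ ih =>
    rw [arcLength_succ]
    linarith [dist_triangle (c.pt i) (c.pt j) (c.pt (j + 1))]

lemma length_nonneg (c : EpsChain ε x y) : 0 ≤ c.length :=
  c.arcLength_mono (Nat.zero_le c.len)

noncomputable def arcParam (c : EpsChain ε x y) (t : ℝ) : X :=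
  c.pt (Nat.findGreatest (fun i => c.arcLength i ≤ t * c.length) c.len)

lemma arcParam_zero (c : EpsChain ε x y) : c.arcParam 0 = x := by
  set i := Nat.findGreatest (fun i => c.arcLength i ≤ 0 * c.length) c.len
  have hi : c.arcLength i ≤ 0 * c.length :=
    Nat.findGreatest_spec (P := fun i => c.arcLength i ≤ 0 * c.length) (Nat.zero_le _)
      (by simp [arcLength_zero])
  have h0i : dist (c.pt 0) (c.pt i) ≤ 0 := by
    linarith [c.dist_pt_le (Nat.zero_le i), c.arcLength_zero]
  exact (dist_le_zero.1 h0i).symm.trans c.pt_zero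

lemma arcParam_one (c : EpsChain ε x y) : c.arcParam 1 = y := by
  rw [arcParam, Nat.findGreatest_eq (by rw [one_mul]; rfl), c.pt_len]

lemma dist_arcParam_le (c : EpsChain ε x y) (t : ℝ) : dist x (c.arcParam t) ≤ c.length := by
  set i := Nat.findGreatest (fun i => c.arcLength i ≤ t * c.length) c.len
  have := c.dist_pt_le (Nat.zero_le i)
  rw [c.pt_zero, arcLength_zero, sub_zero] at this
  exact this.trans (c.arcLength_mono (Nat.findGreatest_le _))

lemma dist_arcParam_le_of_le (c : EpsChain ε x y) (hε : 0 ≤ ε) {s t : ℝ} (hs : 0 ≤ s)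
    (hst : s ≤ t) (ht : t ≤ 1) : dist (c.arcParam s) (c.arcParam t) ≤ (t - s) * c.length + ε := by
  set P : ℝ → ℕ → Prop := fun τ i => c.arcLength i ≤ τ * c.length
  have hL := c.length_nonneg
  have hP0 : ∀ τ, 0 ≤ τ → P τ 0 := fun τ hτ => by simp [P, arcLength_zero]; positivity
  set i := Nat.findGreatest (P s) c.len
  set j := Nat.findGreatest (P t) c.len
  have hij : i ≤ j := Nat.findGreatest_mono (fun _ h => h.trans (by gcongr)) le_rfl
  have hj : c.arcLength j ≤ t * c.length :=
    Nat.findGreatest_spec (Nat.zero_le _) (hP0 t (hs.trans hst))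
  -- the next chain point after `i` is already past arclength `s * c.length`
  have hi : s * c.length ≤ c.arcLength i + ε := by
    rcases (Nat.findGreatest_le c.len : i ≤ c.len).lt_or_eq with hlt | heq
    · have hnext : ¬ P s (i + 1) := Nat.findGreatest_is_greatest (Nat.lt_succ_self i) hlt
      simp only [P, not_le, arcLength_succ] at hnext
      linarith [c.dist_lt i hlt]
    · rw [show i = c.len from heq]
      change s * c.length ≤ c.length + ε
      nlinarith
  calc dist (c.arcParam s) (c.arcParam t) ≤ c.arcLength j - c.arcLength i := c.dist_pt_le hij
    _ ≤ (t - s) * c.length + ε := by linarith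

end EpsChain

noncomputable def chainDist (ε : ℝ) (x y : X) : ℝ≥0∞ :=
  ⨅ c : EpsChain ε x y, ENNReal.ofReal c.length

lemma chainDist_self (ε : ℝ) (x : X) : chainDist ε x x = 0 :=
  le_antisymm ((iInf_le _ (EpsChain.refl ε x)).trans (by simp)) bot_le

lemma chainDist_le_add {ε : ℝ} {x y z : X} (h : dist y z < ε) :
    chainDist ε x z ≤ chainDist ε x y + edist y z := by
  rw [chainDist, chainDist, ENNReal.iInf_add]
  refine le_iInf fun c => (iInf_le _ (c.snoc h)).trans ?_
  rw [EpsChain.length_snoc, ENNReal.ofReal_add c.length_nonneg dist_nonneg, edist_dist]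

/-- Truncation makes the chain distance, which may be infinite, bounded and hence Lipschitz. -/
noncomputable def truncChainDist (ε M : ℝ) (x y : X) : ℝ :=
  (ENNReal.ofReal M).truncateToReal (chainDist ε x y)

section TruncChainDist

variable {ε M : ℝ} {x y z : X}

lemma truncChainDist_self : truncChainDist ε M x x = 0 := by
  simp [truncChainDist, chainDist_self, ENNReal.truncateToReal]

lemma truncChainDist_mem_Icc (hM : 0 ≤ M) : truncChainDist ε M x y ∈ Icc 0 M :=
  ⟨ENNReal.truncateToReal_nonneg,
    (ENNReal.truncateToReal_le ENNReal.ofReal_ne_top).trans_eq (ENNReal.toReal_ofReal hM)⟩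

lemma truncChainDist_le_add (h : dist y z < ε) :
    truncChainDist ε M x z ≤ truncChainDist ε M x y + dist y z := by
  set t := ENNReal.ofReal M
  have hle : min t (chainDist ε x z) ≤ min t (chainDist ε x y) + ENNReal.ofReal (dist y z) :=
    calc min t (chainDist ε x z)
        ≤ min (t + ENNReal.ofReal (dist y z)) (chainDist ε x y + ENNReal.ofReal (dist y z)) :=
          min_le_min le_self_add (by simpa [edist_dist] using chainDist_le_add h)
      _ = _ := min_add_add_right _ _ _
  have hfin : ∀ w, min t w ≠ ⊤ := fun _ =>
    ne_top_of_le_ne_top ENNReal.ofReal_ne_top (min_le_left _ _)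
  have := ENNReal.toReal_mono (ENNReal.add_ne_top.2 ⟨hfin _, ENNReal.ofReal_ne_top⟩) hle
  rwa [ENNReal.toReal_add (hfin _) ENNReal.ofReal_ne_top, ENNReal.toReal_ofReal dist_nonneg] at this

lemma abs_truncChainDist_sub_le (h : dist y z < ε) :
    |truncChainDist ε M x y - truncChainDist ε M x z| ≤ dist y z := by
  have hyz := truncChainDist_le_add (x := x) (M := M) h
  have hzy := truncChainDist_le_add (x := x) (M := M) (dist_comm y z ▸ h)
  exact abs_sub_le_iff.2 ⟨by linarith [dist_comm y z], by linarith⟩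

lemma isLip_truncChainDist (hε : 0 < ε) (hM : 0 ≤ M) (x : X) : IsLip (truncChainDist ε M x) :=
  ⟨_, lipschitzWith_of_le_add_of_mem_Icc hε (fun _ => truncChainDist_mem_Icc hM)
    fun _ _ => truncChainDist_le_add⟩

lemma lipLow_truncChainDist_mem_Icc (hε : 0 < ε) (x y : X) :
    lipLow (truncChainDist ε M x) y ∈ Icc 0 1 :=
  lipLow_mem_Icc hε zero_le_one fun _ h => by rw [one_mul]; exact abs_truncChainDist_sub_le h

lemma exists_epsChain_length_lt (h : truncChainDist ε M x y < M) :
    ∃ c : EpsChain ε x y, c.length < M := by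
  have hM : 0 ≤ M := ENNReal.truncateToReal_nonneg.trans h.le
  obtain ⟨c, hc⟩ : ∃ c : EpsChain ε x y, ENNReal.ofReal c.length < ENNReal.ofReal M := by
    refine iInf_lt_iff.1 (lt_of_not_ge fun hle => h.not_ge ?_)
    calc M = (ENNReal.ofReal M).truncateToReal (ENNReal.ofReal M) := by
          rw [ENNReal.truncateToReal_eq_toReal ENNReal.ofReal_ne_top le_rfl,
            ENNReal.toReal_ofReal hM]
      _ ≤ truncChainDist ε M x y :=
          ENNReal.monotone_truncateToReal ENNReal.ofReal_ne_top hle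
  exact ⟨c, (ENNReal.ofReal_lt_ofReal_iff'.1 hc).1⟩

end TruncChainDist

theorem exists_lipschitzOnWith_of_forall_epsChain [ProperSpace X] {x y : X} {Λ : ℝ}
    (h : ∀ ε > 0, ∃ c : EpsChain ε x y, c.length ≤ Λ) :
    ∃ γ : ℝ → X, LipschitzOnWith Λ.toNNReal γ (Icc 0 1) ∧ γ 0 = x ∧ γ 1 = y := by
  choose c hc using fun n : ℕ => h (1 / (n + 1)) Nat.one_div_pos_of_nat
  set U := Ultrafilter.of (atTop : Filter ℕ)
  have hU : (U : Filter ℕ) ≤ atTop := Ultrafilter.of_le _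
  have hlim : ∀ t, ∃ z, Tendsto (fun n => (c n).arcParam t) U (𝓝 z) := fun t => by
    obtain ⟨z, -, hz⟩ := (isCompact_closedBall x Λ).ultrafilter_le_nhds
        (U.map fun n => (c n).arcParam t) <| by
      rw [Ultrafilter.coe_map, le_principal_iff, mem_map]
      exact univ_mem' fun n => mem_closedBall'.2 (((c n).dist_arcParam_le t).trans (hc n))
    exact ⟨z, by rwa [Ultrafilter.coe_map] at hz⟩
  choose γ hγ using hlim
  have hconst : ∀ t z, (∀ n, (c n).arcParam t = z) → γ t = z := fun t z hz =>
    tendsto_nhds_unique (hγ t) (by simp only [hz]; exact tendsto_const_nhds)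
  refine ⟨γ, LipschitzOnWith.of_dist_le_mul fun t ht s hs => ?_,
    hconst 0 x fun n => (c n).arcParam_zero, hconst 1 y fun n => (c n).arcParam_one⟩
  wlog hst : s ≤ t generalizing s t
  · rw [dist_comm, dist_comm t]; exact this s hs t ht (le_of_not_ge hst)
  have hbound : ∀ n : ℕ, dist ((c n).arcParam s) ((c n).arcParam t) ≤
      (t - s) * Λ + 1 / (n + 1) := fun n =>
    ((c n).dist_arcParam_le_of_le (by positivity) hs.1 hst ht.2).trans
      (by nlinarith [hc n, sub_nonneg.2 hst])
  have hlimit : Tendsto (fun n : ℕ => (t - s) * Λ + 1 / (n + 1)) U (𝓝 ((t - s) * Λ)) := by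
    simpa using (tendsto_one_div_add_atTop_nhds_zero_nat.mono_left hU).const_add ((t - s) * Λ)
  calc dist (γ t) (γ s) = dist (γ s) (γ t) := dist_comm _ _
    _ ≤ (t - s) * Λ := le_of_tendsto_of_tendsto' ((hγ s).dist (hγ t)) hlimit hbound
    _ ≤ Λ.toNNReal * dist t s := by
      rw [Real.dist_eq, abs_of_nonneg (sub_nonneg.2 hst), mul_comm]
      exact mul_le_mul_of_nonneg_right (Real.le_coe_toNNReal Λ) (sub_nonneg.2 hst)

section Averages

variable {α : Type*} [MeasurableSpace α] {μ : Measure α} {s t : Set α} {f g : α → ℝ}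

lemma abs_average_le_average_abs (μ : Measure α) (f : α → ℝ) :
    |⨍ x, f x ∂μ| ≤ ⨍ x, |f x| ∂μ := by
  simpa only [average_eq', Real.norm_eq_abs] using norm_integral_le_integral_norm f

lemma setAverage_sub_const (hs0 : μ s ≠ 0) (hs : μ s ≠ ∞) (hf : IntegrableOn f s μ) (c : ℝ) :
    ⨍ x in s, (f x - c) ∂μ = ⨍ x in s, f x ∂μ - c := by
  have hpos : 0 < μ.real s := ENNReal.toReal_pos hs0 hs
  rw [setAverage_eq, setAverage_eq, integral_sub hf (integrableOn_const hs), setIntegral_const,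
    smul_eq_mul, smul_eq_mul, smul_eq_mul]
  field_simp

lemma abs_setAverage_sub_le (hs0 : μ s ≠ 0) (hs : μ s ≠ ∞) (hf : IntegrableOn f s μ) (c : ℝ) :
    |⨍ x in s, f x ∂μ - c| ≤ ⨍ x in s, |f x - c| ∂μ := by
  rw [← setAverage_sub_const hs0 hs hf]
  exact abs_average_le_average_abs _ _

lemma abs_setAverage_le (hs0 : μ s ≠ 0) (hs : μ s ≠ ∞) {C : ℝ} (hC : ∀ x ∈ s, |g x| ≤ C) :
    |⨍ x in s, g x ∂μ| ≤ C := by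
  have hpos : 0 < μ.real s := ENNReal.toReal_pos hs0 hs
  rw [setAverage_eq, smul_eq_mul, abs_mul, abs_inv, abs_of_pos hpos, inv_mul_le_iff₀ hpos,
    mul_comm]
  simpa only [Real.norm_eq_abs] using norm_setIntegral_le_of_norm_le_const (f := g) hs.lt_top hC

lemma setAverage_le_mul_setAverage {c : ℝ≥0} (hst : s ⊆ t) (hs0 : μ s ≠ 0) (ht : μ t ≠ ∞)
    (hμ : μ t ≤ c * μ s) (hg0 : ∀ x, 0 ≤ g x) (hg : IntegrableOn g t μ) :
    ⨍ x in s, g x ∂μ ≤ c * ⨍ x in t, g x ∂μ := by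
  have hs : μ s ≠ ∞ := ne_top_of_le_ne_top ht (measure_mono hst)
  have ha : 0 < μ.real s := ENNReal.toReal_pos hs0 hs
  have hab : μ.real s ≤ μ.real t := measureReal_mono hst ht
  have hbc : μ.real t ≤ c * μ.real s := by
    simpa [measureReal_def] using ENNReal.toReal_mono (by finiteness) hμ
  have hint : ∫ x in s, g x ∂μ ≤ ∫ x in t, g x ∂μ :=
    setIntegral_mono_set hg (ae_of_all _ fun x => hg0 x) hst.eventuallyLE
  have hint0 : 0 ≤ ∫ x in t, g x ∂μ := integral_nonneg hg0
  rw [setAverage_eq, setAverage_eq, smul_eq_mul, smul_eq_mul, ← mul_assoc]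
  calc (μ.real s)⁻¹ * ∫ x in s, g x ∂μ ≤ (μ.real s)⁻¹ * ∫ x in t, g x ∂μ := by gcongr
    _ ≤ c * (μ.real t)⁻¹ * ∫ x in t, g x ∂μ := by
      gcongr
      rw [← div_eq_mul_inv, le_div_iff₀ (ha.trans_le hab)]
      field_simp
      linarith

lemma abs_setAverage_sub_setAverage_le {c : ℝ≥0} (hst : s ⊆ t) (hs0 : μ s ≠ 0) (ht : μ t ≠ ∞)
    (hμ : μ t ≤ c * μ s) (hf : IntegrableOn f t μ) :
    |⨍ x in s, f x ∂μ - ⨍ x in t, f x ∂μ| ≤ c * ⨍ x in t, |f x - ⨍ y in t, f y ∂μ| ∂μ :=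
  (abs_setAverage_sub_le hs0 (ne_top_of_le_ne_top ht (measure_mono hst)) (hf.mono_set hst) _).trans
    (setAverage_le_mul_setAverage hst hs0 ht hμ (fun _ => abs_nonneg _)
      (hf.sub (integrableOn_const ht)).abs)

end Averages

namespace DoublingWith

variable [MeasurableSpace X] {μ : Measure X} {C : ℝ≥0}

lemma measure_ball_two_pow_mul_le (hD : DoublingWith μ C) (k : ℕ) (x : X) {r : ℝ}
    (hr : 0 < r) : μ (ball x (2 ^ k * r)) ≤ (C : ℝ≥0∞) ^ k * μ (ball x r) := by
  induction k with
  | zero => simp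
  | succ k ih =>
    calc μ (ball x (2 ^ (k + 1) * r)) = μ (ball x (2 * (2 ^ k * r))) := by ring_nf
      _ ≤ C * μ (ball x (2 ^ k * r)) := hD x _ (by positivity)
      _ ≤ C * (C ^ k * μ (ball x r)) := by gcongr
      _ = C ^ (k + 1) * μ (ball x r) := by ring

variable [OpensMeasurableSpace X]

lemma exists_card_le_of_isSeparated (hD : DoublingWith μ C)
    (hpos : ∀ x (r : ℝ), 0 < r → μ (ball x r) ≠ 0) (hfin : ∀ x r, μ (ball x r) ≠ ∞)
    (x : X) {R : ℝ} (hR : 0 < R) {δ : ℝ≥0} (hδ : 0 < δ) :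
    ∃ N : ℕ, ∀ t : Finset X, ↑t ⊆ ball x R → IsSeparated δ (t : Set X) → t.card ≤ N := by
  have hδ2 : (0 : ℝ) < δ / 2 := by positivity
  obtain ⟨k, hk⟩ := pow_unbounded_of_one_lt (2 * R / (δ / 2)) one_lt_two
  rw [div_lt_iff₀ hδ2] at hk
  set b := (C : ℝ≥0∞) ^ k * μ (ball x (R + δ / 2))
  have hb : b / μ (ball x R) ≠ ∞ :=
    ENNReal.div_ne_top (ENNReal.mul_ne_top (by simp) (hfin _ _)) (hpos x R hR)
  obtain ⟨N, hN⟩ := ENNReal.exists_nat_gt hb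
  refine ⟨N, fun t ht hsep => ?_⟩
  have hsmall : ∀ y ∈ t, μ (ball x R) ≤ C ^ k * μ (ball y (δ / 2)) := fun y hy =>
    calc μ (ball x R) ≤ μ (ball y (2 ^ k * (δ / 2))) := measure_mono <| ball_subset_ball' <| by
          linarith [mem_ball.1 (ht hy), dist_comm x y]
      _ ≤ _ := hD.measure_ball_two_pow_mul_le k y hδ2
  have hdisj : (t : Set X).PairwiseDisjoint fun y => ball y (δ / 2) := fun y hy y' hy' hne =>
    ball_disjoint_ball <| by
      have : (δ : ℝ≥0∞) < edist y y' := hsep hy hy' hne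
      rw [edist_dist, ← ENNReal.ofReal_coe_nnreal, ENNReal.ofReal_lt_ofReal_iff'] at this
      linarith [this.1]
  have hunion : ∑ y ∈ t, μ (ball y (δ / 2)) ≤ μ (ball x (R + δ / 2)) := by
    rw [← measure_biUnion_finset hdisj fun y _ => measurableSet_ball]
    refine measure_mono (iUnion₂_subset fun y hy => ball_subset_ball' ?_)
    linarith [mem_ball.1 (ht hy)]
  have hcard : (t.card : ℝ≥0∞) * μ (ball x R) ≤ b := by
    calc (t.card : ℝ≥0∞) * μ (ball x R) ≤ ∑ y ∈ t, C ^ k * μ (ball y (δ / 2)) := by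
          simpa using Finset.card_nsmul_le_sum t _ _ hsmall
      _ ≤ b := by rw [← Finset.mul_sum]; exact mul_le_mul_right hunion _
  have := (ENNReal.le_div_iff_mul_le (Or.inl (hpos x R hR)) (Or.inl (hfin x R))).2 hcard
  exact_mod_cast (this.trans_lt hN).le

lemma packingNumber_ball_ne_top (hD : DoublingWith μ C)
    (hpos : ∀ x (r : ℝ), 0 < r → μ (ball x r) ≠ 0) (hfin : ∀ x r, μ (ball x r) ≠ ∞)
    (x : X) (R : ℝ) {δ : ℝ≥0} (hδ : 0 < δ) : packingNumber δ (ball x R) ≠ ⊤ := by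
  rcases le_or_gt R 0 with hR | hR
  · simp [ball_eq_empty.2 hR]
  obtain ⟨N, hN⟩ := hD.exists_card_le_of_isSeparated hpos hfin x hR hδ
  refine ne_top_of_le_ne_top (ENat.natCast_ne_top N) (iSup₂_le fun s hs => iSup_le fun hsep => ?_)
  have hsf : s.Finite := by
    by_contra hinf
    obtain ⟨t, hts, htc⟩ := Set.Infinite.exists_subset_card_eq hinf (N + 1)
    have := hN t (hts.trans hs) (hsep.subset hts)
    omega
  rw [hsf.encard_eq_coe_toFinset_card]
  exact_mod_cast hN _ (by simpa using hs) (by simpa using hsep)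

lemma totallyBounded_ball (hD : DoublingWith μ C)
    (hpos : ∀ x (r : ℝ), 0 < r → μ (ball x r) ≠ 0) (hfin : ∀ x r, μ (ball x r) ≠ ∞)
    (x : X) (R : ℝ) : TotallyBounded (ball x R) := by
  refine Metric.totallyBounded_iff.2 fun ε hε => ?_
  have hδ : 0 < (ε / 2).toNNReal := by simpa using hε
  have hpack := hD.packingNumber_ball_ne_top hpos hfin x R hδ
  refine ⟨maximalSeparatedSet _ (ball x R),
    Set.encard_ne_top_iff.1 (encard_maximalSeparatedSet hpack ▸ hpack),
    (isCover_maximalSeparatedSet hpack).subset_iUnion_closedBall.trans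
      (iUnion₂_mono fun y _ => closedBall_subset_ball ?_)⟩
  rw [Real.coe_toNNReal _ (by positivity)]
  linarith

lemma properSpace [CompleteSpace X] (hD : DoublingWith μ C)
    (hpos : ∀ x (r : ℝ), 0 < r → μ (ball x r) ≠ 0) (hfin : ∀ x r, μ (ball x r) ≠ ∞) :
    ProperSpace X :=
  ⟨fun x r => isCompact_iff_totallyBounded_isComplete.2
    ⟨(hD.totallyBounded_ball hpos hfin x (r + 1)).subset (closedBall_subset_ball (by linarith)),
      isClosed_closedBall.isComplete⟩⟩

end DoublingWith

def MeanOscillationLE [MeasurableSpace X] (μ : Measure X) (f : X → ℝ) (K : ℝ) : Prop :=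
  ∀ x r, 0 < r → ⨍ y in ball x r, |f y - ⨍ z in ball x r, f z ∂μ| ∂μ ≤ K * r

section MeanOscillation

variable [MeasurableSpace X] [OpensMeasurableSpace X] {μ : Measure X} {C : ℝ≥0} {f : X → ℝ}
  {K : ℝ}

lemma LipschitzWith.integrableOn_ball {Kf : ℝ≥0} (hKf : LipschitzWith Kf f) {x : X} {r : ℝ}
    (hfin : μ (ball x r) ≠ ∞) : IntegrableOn f (ball x r) μ := by
  refine Measure.integrableOn_of_bounded (M := |f x| + Kf * r) hfin
    hKf.continuous.aestronglyMeasurable ((ae_restrict_iff' measurableSet_ball).2 <| ae_of_all _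
      fun y hy => ?_)
  have := hKf.dist_le_mul y x
  rw [Real.dist_eq] at this
  have hy : dist y x < r := hy
  rw [Real.norm_eq_abs]
  linarith [abs_sub_abs_le_abs_sub (f y) (f x), mul_le_mul_of_nonneg_left hy.le Kf.coe_nonneg]

lemma LipschitzWith.abs_setAverage_ball_sub_le {Kf : ℝ≥0} (hf : LipschitzWith Kf f) {z : X} {r : ℝ}
    (h0 : μ (ball z r) ≠ 0) (hfin : μ (ball z r) ≠ ∞) :
    |⨍ y in ball z r, f y ∂μ - f z| ≤ Kf * r := by
  rw [← setAverage_sub_const h0 hfin (hf.integrableOn_ball hfin)]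
  refine abs_setAverage_le h0 hfin fun y hy => ?_
  rw [← Real.dist_eq]
  exact (hf.dist_le_mul y z).trans (by gcongr; exact (mem_ball.1 hy).le)

lemma MeanOscillationLE.abs_sub_setAverage_ball_le (hosc : MeanOscillationLE μ f K)
    (hD : DoublingWith μ C) (hpos : ∀ x (r : ℝ), 0 < r → μ (ball x r) ≠ 0)
    (hfin : ∀ x r, μ (ball x r) ≠ ∞) (hf : IsLip f) (z : X) {R : ℝ} (hR : 0 < R) :
    |f z - ⨍ y in ball z R, f y ∂μ| ≤ 2 * C * K * R := by
  obtain ⟨Kf, hKf⟩ := hf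
  set u : ℕ → ℝ := fun n => ⨍ y in ball z (R / 2 ^ n), f y ∂μ
  have hr : ∀ n : ℕ, 0 < R / 2 ^ n := fun n => by positivity
  have hstep : ∀ n, dist (u n) (u (n + 1)) ≤ 2 * C * K * R / 2 / 2 ^ n := fun n => by
    have hdouble : R / 2 ^ n = 2 * (R / 2 ^ (n + 1)) := by ring
    have hsub : ball z (R / 2 ^ (n + 1)) ⊆ ball z (R / 2 ^ n) :=
      ball_subset_ball (by linarith [hr (n + 1)])
    rw [Real.dist_eq, abs_sub_comm]
    calc |u (n + 1) - u n| ≤ C * ⨍ y in ball z (R / 2 ^ n), |f y - u n| ∂μ :=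
          abs_setAverage_sub_setAverage_le hsub (hpos z _ (hr _)) (hfin z _)
            (hdouble ▸ hD z _ (hr _)) (hKf.integrableOn_ball (hfin z _))
      _ ≤ C * (K * (R / 2 ^ n)) := by gcongr; exact hosc z _ (hr n)
      _ = 2 * C * K * R / 2 / 2 ^ n := by ring
  have hlim : Tendsto u atTop (𝓝 (f z)) := by
    refine tendsto_iff_dist_tendsto_zero.2 (squeeze_zero (fun _ => dist_nonneg)
      (fun n => (Real.dist_eq _ _).trans_le (hKf.abs_setAverage_ball_sub_le (hpos z _ (hr n))
        (hfin z _))) ?_)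
    simpa using (tendsto_const_nhds.div_atTop
      (tendsto_pow_atTop_atTop_of_one_lt one_lt_two)).const_mul (Kf : ℝ)
  simpa [u, Real.dist_eq, abs_sub_comm] using
    dist_le_of_le_geometric_two_of_tendsto₀ hstep hlim

lemma MeanOscillationLE.abs_sub_le_mul_dist (hosc : MeanOscillationLE μ f K) (hD : DoublingWith μ C)
    (hpos : ∀ x (r : ℝ), 0 < r → μ (ball x r) ≠ 0) (hfin : ∀ x r, μ (ball x r) ≠ ∞)
    (hf : IsLip f) (x y : X) :
    |f y - f x| ≤ (6 * C + 2 * C ^ 2) * K * dist x y := by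
  rcases eq_or_ne x y with rfl | hxy
  · simp
  set R := dist x y
  have hR : 0 < R := dist_pos.2 hxy
  set a := ⨍ z in ball y R, f z ∂μ
  set b := ⨍ z in ball x (2 * R), f z ∂μ
  have hsub : ball y R ⊆ ball x (2 * R) := ball_subset_ball' (by rw [dist_comm]; linarith)
  have hμ : μ (ball x (2 * R)) ≤ ((C ^ 2 : ℝ≥0) : ℝ≥0∞) * μ (ball y R) := by
    calc μ (ball x (2 * R)) ≤ μ (ball y (2 ^ 2 * R)) :=
          measure_mono (ball_subset_ball' (by linarith))
      _ ≤ _ := by simpa using hD.measure_ball_two_pow_mul_le 2 y hR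
  obtain ⟨Kf, hKf⟩ := hf
  have hab : |a - b| ≤ C ^ 2 * (K * (2 * R)) := by
    refine (abs_setAverage_sub_setAverage_le hsub (hpos y R hR) (hfin x _) hμ
      (hKf.integrableOn_ball (hfin x _))).trans ?_
    push_cast
    gcongr
    exact hosc x _ (by positivity)
  have hya := hosc.abs_sub_setAverage_ball_le hD hpos hfin ⟨Kf, hKf⟩ y hR
  have hxb := hosc.abs_sub_setAverage_ball_le hD hpos hfin ⟨Kf, hKf⟩ x (by positivity : 0 < 2 * R)
  rw [abs_sub_comm] at hxb
  calc |f y - f x| ≤ |f y - a| + |a - b| + |b - f x| := by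
        linarith [abs_sub_le (f y) a (f x), abs_sub_le a b (f x)]
    _ ≤ 2 * C * K * R + C ^ 2 * (K * (2 * R)) + 2 * C * K * (2 * R) := by gcongr
    _ = (6 * C + 2 * C ^ 2) * K * R := by ring

end MeanOscillation

namespace PoincareIneq

variable [MeasurableSpace X] {μ : Measure X} {p L : ℝ}

lemma measure_ball_ne_zero (hP : PoincareIneq μ p L) (x : X) (r : ℝ) (hr : 0 < r) :
    μ (ball x r) ≠ 0 :=
  (hP.1 x r hr).1.ne'

lemma measure_ball_ne_top (hP : PoincareIneq μ p L) (x : X) (r : ℝ) : μ (ball x r) ≠ ∞ := by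
  rcases le_or_gt r 0 with hr | hr
  · simp [ball_eq_empty.2 hr]
  · exact (hP.1 x r hr).2.ne

lemma meanOscillationLE [OpensMeasurableSpace X] (hP : PoincareIneq μ p L) (hL : 0 ≤ L)
    (hp : 0 ≤ p) {f : X → ℝ} (hf : IsLip f) (hlip : ∀ z, lipLow f z ∈ Icc 0 1) :
    MeanOscillationLE μ f L := by
  intro x r hr
  have hlip_avg : |⨍ z in ball x (L * r), lipLow f z ^ p ∂μ| ≤ 1 := by
    rcases eq_or_ne (μ (ball x (L * r))) 0 with h0 | h0
    · simp [setAverage_eq, measureReal_def, h0]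
    refine abs_setAverage_le h0 (hP.measure_ball_ne_top x _) fun z _ => ?_
    rw [abs_of_nonneg (Real.rpow_nonneg (hlip z).1 p)]
    exact Real.rpow_le_one (hlip z).1 (hlip z).2 hp
  calc _ ≤ L * r * (⨍ z in ball x (L * r), lipLow f z ^ p ∂μ) ^ (1 / p) := hP.2 f hf x r hr
    _ ≤ L * r * 1 := by
      gcongr
      refine Real.rpow_le_one ?_ (le_of_abs_le hlip_avg) (by positivity)
      rw [setAverage_eq, smul_eq_mul]
      exact mul_nonneg (by positivity)
        (integral_nonneg fun z => Real.rpow_nonneg (hlip z).1 p)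
    _ = L * r := mul_one _

lemma exists_epsChain_length_le [OpensMeasurableSpace X] (hP : PoincareIneq μ p L) {C : ℝ≥0}
    (hD : DoublingWith μ C) (hL : 0 ≤ L) (hp : 0 ≤ p) {ε : ℝ} (hε : 0 < ε) (x y : X) :
    ∃ c : EpsChain ε x y, c.length ≤ ((6 * C + 2 * C ^ 2) * L + 1) * dist x y := by
  rcases eq_or_ne x y with rfl | hxy
  · exact ⟨EpsChain.refl ε x, by simp⟩
  set M := ((6 * C + 2 * C ^ 2) * L + 1) * dist x y
  have hd : 0 < dist x y := dist_pos.2 hxy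
  have hM : (6 * C + 2 * C ^ 2) * L * dist x y < M := by
    simp only [M]; nlinarith
  have hM0 : 0 ≤ (6 * C + 2 * C ^ 2) * L * dist x y :=
    mul_nonneg (mul_nonneg (by positivity) hL) hd.le
  have hf := isLip_truncChainDist hε (hM0.trans hM.le) x
  have hosc := hP.meanOscillationLE hL hp hf (lipLow_truncChainDist_mem_Icc hε x)
  have key := hosc.abs_sub_le_mul_dist hD hP.measure_ball_ne_zero hP.measure_ball_ne_top hf x y
  rw [truncChainDist_self, sub_zero] at key
  obtain ⟨c, hc⟩ := exists_epsChain_length_lt ((le_abs_self _).trans key |>.trans_lt hM)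
  exact ⟨c, hc.le⟩

end PoincareIneq

end

/-- Theorem A.1, Semmes: a complete doubling metric measure space with a
`p`-Poincaré inequality is `λ`-quasiconvex, `λ` depending only on the constants. -/
theorem poincare_implies_quasiconvex
    (Cμ : ℝ≥0) (L p : ℝ) (hL : 1 ≤ L) (hp : 1 ≤ p) :
    ∃ lam : ℝ, 0 < lam ∧
      ∀ (X : Type) [MetricSpace X] [CompleteSpace X] [MeasurableSpace X] [BorelSpace X]
        (μ : Measure X),
        DoublingWith μ Cμ → PoincareIneq μ p L →
        ∀ x x' : X, ∃ γ : ℝ → X,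
          ContinuousOn γ (Set.Icc 0 1) ∧ γ 0 = x ∧ γ 1 = x' ∧
          eVariationOn γ (Set.Icc 0 1) ≤ ENNReal.ofReal (lam * dist x x') := by
  refine ⟨(6 * Cμ + 2 * Cμ ^ 2) * L + 1,
    add_pos_of_nonneg_of_pos (mul_nonneg (by positivity) (by linarith)) one_pos,
    fun X _ _ _ _ μ hD hP x x' => ?_⟩
  have : ProperSpace X :=
    hD.properSpace hP.measure_ball_ne_zero hP.measure_ball_ne_top
  obtain ⟨γ, hγ, hγ0, hγ1⟩ := exists_lipschitzOnWith_of_forall_epsChain fun ε hε =>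
    hP.exists_epsChain_length_le hD (by linarith) (by linarith) hε x x'
  refine ⟨γ, hγ.continuousOn, hγ0, hγ1, ?_⟩
  simpa [ENNReal.ofReal] using hγ.comp_eVariationOn_le (mapsTo_id (Icc (0 : ℝ) 1))
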